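/- arXiv:2106.05245 — 3 statements merged into one kernel-verified Lean document; each statement's English description precedes it below -/
import Mathlib

section
/- Let G be a finite undirected graph with double cover H, and let S ⊆ V_H be a simple set with vol_H(S) > 0. Define L = {u ∈ V_G : u₁ ∈ S} and R = {u ∈ V_G : u₂ ∈ S}. Then L and R are disjoint and β_G(L, R) = Φ_H(S). -/
open Finset

namespace Paper

variable {V : Type*} [Fintype V] [DecidableEq V]

/-- The degree of a vertex `v` in the graph `G`. -/
noncomputable def deg (G : SimpleGraph V) (v : V) : ℕ := {u | G.Adj v u}.ncard

/-- The volume of a set of vertices: the sum of the degrees of its members. -/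
noncomputable def vol (G : SimpleGraph V) (S : Finset V) : ℕ := ∑ v ∈ S, deg G v

/-- The number of ordered pairs `(u,v)` with `u ∈ S`, `v ∈ T` and `{u,v} ∈ E(G)`.
For disjoint `S`, `T` this is the number of edges between `S` and `T`, and
`cutEdges G S Sᶜ = |∂(S)|`. -/
noncomputable def cutEdges (G : SimpleGraph V) (S T : Finset V) : ℕ :=
  {e : V × V | e.1 ∈ S ∧ e.2 ∈ T ∧ G.Adj e.1 e.2}.ncard

/-- The conductance `Φ(S) = |∂(S)| / min(vol(S), vol(V \ S))`. -/
noncomputable def conductance (G : SimpleGraph V) (S : Finset V) : ℝ :=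
  (cutEdges G S Sᶜ : ℝ) / min (vol G S : ℝ) (vol G Sᶜ : ℝ)

/-- The bipartiteness ratio `β(L,R) = 1 - 2 e(L,R) / vol(L ∪ R)`. -/
noncomputable def bipartiteness (G : SimpleGraph V) (L R : Finset V) : ℝ :=
  1 - 2 * (cutEdges G L R : ℝ) / (vol G (L ∪ R) : ℝ)

/-- The double cover of `G`: on vertex set `V ⊕ V` (with `Sum.inl v = v₁` and
`Sum.inr v = v₂`), for every edge `{u,v}` of `G` there are edges `{u₁,v₂}` and `{u₂,v₁}`. -/
def doubleCover (G : SimpleGraph V) : SimpleGraph (V ⊕ V) :=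
  SimpleGraph.fromRel (fun x y => ∃ u v, x = Sum.inl u ∧ y = Sum.inr v ∧ G.Adj u v)

open scoped Classical in
/-- One step of the lazy random walk `W = (1/2)(I + D⁻¹A)`, acting on row vectors:
`p ↦ pW`, so `(lazyWalk G p) x = (1/2) p(x) + (1/2) ∑_{y ~ x} p(y)/deg(y)`. -/
noncomputable def lazyWalk (G : SimpleGraph V) (p : V → ℝ) : V → ℝ :=
  fun x => (1/2) * p x + (1/2) * ∑ y, (if G.Adj y x then p y / (deg G y : ℝ) else 0)

/-- The simplify operator `σ` on vectors indexed by the double cover: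
`(σ∘p)(u₁) = max(0, p(u₁) - p(u₂))` and `(σ∘p)(u₂) = max(0, p(u₂) - p(u₁))`. -/
noncomputable def simplify (p : V ⊕ V → ℝ) : V ⊕ V → ℝ :=
  Sum.elim (fun u => max 0 (p (Sum.inl u) - p (Sum.inr u)))
           (fun u => max 0 (p (Sum.inr u) - p (Sum.inl u)))

/-- `q` is the personalised Pagerank vector `pr(α, s)`, i.e. it satisfies
`q = α s + (1-α) q W`. -/
def IsPagerank (G : SimpleGraph V) (α : ℝ) (s q : V → ℝ) : Prop :=
  ∀ x, q x = α * s x + (1 - α) * lazyWalk G q x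

/-- `p` is an approximate Pagerank vector `apr(α, s, r)` with residual `r`, i.e.
`p + pr(α, r) = pr(α, s)`. -/
def IsApr (G : SimpleGraph V) (α : ℝ) (s r p : V → ℝ) : Prop :=
  ∃ qs qr, IsPagerank G α s qs ∧ IsPagerank G α r qr ∧ ∀ x, p x + qr x = qs x

/-- Given an ordering `ord` of the vertices, the sweep set `S_j` consists of the
first `j` vertices in this ordering. -/
def sweepSet {W : Type*} [Fintype W] (ord : Fin (Fintype.card W) ≃ W) (j : ℕ) :
    Finset W :=
  Finset.univ.filter fun x => (ord.symm x : ℕ) < j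

/-- The size of the support `supp(p) = {u : p(u) ≠ 0}` of a vector. -/
noncomputable def suppCard {W : Type*} (p : W → ℝ) : ℕ := {x | p x ≠ 0}.ncard

/-- The Lovász–Simonovits curve of a vector `p`:
`p[x] = max { ∑_u w(u) p(u) : w ∈ [0,1]^V, ∑_u w(u) deg(u) = x }`. -/
noncomputable def lsCurve (G : SimpleGraph V) (p : V → ℝ) (x : ℝ) : ℝ :=
  sSup {y | ∃ w : V → ℝ, (∀ u, 0 ≤ w u ∧ w u ≤ 1) ∧
    (∑ u, w u * (deg G u : ℝ)) = x ∧ y = ∑ u, w u * p u}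

/-! ### Directed graphs -/

/-- Out-degree of `u` in the digraph with edge relation `E`. -/
noncomputable def degOut (E : V → V → Prop) (u : V) : ℕ := {v | E u v}.ncard

/-- In-degree of `u` in the digraph with edge relation `E`. -/
noncomputable def degIn (E : V → V → Prop) (u : V) : ℕ := {v | E v u}.ncard

/-- Out-volume `vol_out(S) = ∑_{u ∈ S} deg_out(u)`. -/
noncomputable def volOut (E : V → V → Prop) (S : Finset V) : ℕ := ∑ u ∈ S, degOut E u

/-- In-volume `vol_in(S) = ∑_{u ∈ S} deg_in(u)`. -/
noncomputable def volIn (E : V → V → Prop) (S : Finset V) : ℕ := ∑ u ∈ S, degIn E u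

/-- The number of directed edges from `L` to `R`. -/
noncomputable def eDir (E : V → V → Prop) (L R : Finset V) : ℕ :=
  {e : V × V | e.1 ∈ L ∧ e.2 ∈ R ∧ E e.1 e.2}.ncard

/-- The total number of directed edges of the digraph. -/
noncomputable def numEdges (E : V → V → Prop) : ℕ := {e : V × V | E e.1 e.2}.ncard

/-- The flow ratio `F(L,R) = 1 - 2 e(L,R) / (vol_out(L) + vol_in(R))`. -/
noncomputable def flowRatio (E : V → V → Prop) (L R : Finset V) : ℝ :=
  1 - 2 * (eDir E L R : ℝ) / ((volOut E L : ℝ) + (volIn E R : ℝ))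

/-- The semi-double cover of a digraph: on vertex set `V ⊕ V` (with `Sum.inl v = v₁`,
`Sum.inr v = v₂`), for every directed edge `(u,v)` there is an undirected edge `{u₁, v₂}`. -/
def semiDoubleCover (E : V → V → Prop) : SimpleGraph (V ⊕ V) :=
  SimpleGraph.fromRel (fun x y => ∃ u v, x = Sum.inl u ∧ y = Sum.inr v ∧ E u v)

/-! ### The evolving set process -/

/-- `χ_v W χ_S^T`: the probability that one step of the lazy random walk started
at `v` ends in `S`. -/
noncomputable def walkToSet (H : SimpleGraph V) (S : Finset V) (v : V) : ℝ :=
  (1/2) * (if v ∈ S then (1:ℝ) else 0)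
    + (1/2) * (({y | H.Adj v y ∧ y ∈ S}.ncard : ℝ) / (deg H v : ℝ))

/-- The transition kernel `K(S, S')` of the evolving set process: the probability,
over a uniformly random threshold `t ∈ [0,1]`, that `{v : χ_v W χ_S^T ≥ t} = S'`. -/
noncomputable def espKernel (H : SimpleGraph V) (S S' : Finset V) : ℝ :=
  (MeasureTheory.volume {t : ℝ | t ∈ Set.Icc (0:ℝ) 1 ∧
    {v | t ≤ walkToSet H S v} = (S' : Set V)}).toReal

/-- The transition kernel `K̂(S,S') = (vol(S')/vol(S)) K(S,S')` of the volume-biased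
evolving set process. -/
noncomputable def vbKernel (H : SimpleGraph V) (S S' : Finset V) : ℝ :=
  ((vol H S' : ℝ) / (vol H S : ℝ)) * espKernel H S S'

open scoped Classical in
/-- The probability that a sample path `(S₀, …, S_T)` of the volume-biased evolving
set process started from `S₀ = {x}` satisfies the property `P`. -/
noncomputable def pathProb (H : SimpleGraph V) (T : ℕ) (x : V)
    (P : (Fin (T+1) → Finset V) → Prop) : ℝ :=
  ∑ f ∈ Finset.univ.filter (fun f : Fin (T+1) → Finset V => f 0 = {x} ∧ P f),
    ∏ i : Fin T, vbKernel H (f i.castSucc) (f i.succ)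

/-!
A simple set of the double cover has the form `S = L.disjSum R` with `L`, `R` disjoint. Every
edge of `G` between `L` and `R` lifts to two edges inside `S`, and `vol_H(S) = vol_G(L ∪ R)`,
so `|∂S| = vol(S) - 2 e(L,R)`. Moreover `Sᶜ = Lᶜ.disjSum Rᶜ` with `R ⊆ Lᶜ` and `L ⊆ Rᶜ`, so
`vol(S) ≤ vol(Sᶜ)` and the minimum in `Φ_H(S)` is `vol(S)`; hence `Φ_H(S) = β(L,R)`.
-/

section Counting

open scoped Classical

variable {W : Type*}

theorem deg_eq_sum [Fintype W] (G : SimpleGraph W) (v : W) :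
    deg G v = ∑ u, if G.Adj v u then 1 else 0 := by
  rw [deg, Set.ncard_eq_toFinset_card', Set.toFinset_ofPred, card_filter]

theorem cutEdges_eq_sum (G : SimpleGraph W) (S T : Finset W) :
    cutEdges G S T = ∑ x ∈ S, ∑ y ∈ T, if G.Adj x y then 1 else 0 := by
  have hset : {e : W × W | e.1 ∈ S ∧ e.2 ∈ T ∧ G.Adj e.1 e.2}
      = ↑((S ×ˢ T).filter fun e => G.Adj e.1 e.2) := by
    ext; simp [and_assoc]
  rw [cutEdges, hset, Set.ncard_coe_finset, card_filter, sum_product]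

theorem cutEdges_comm (G : SimpleGraph W) (S T : Finset W) :
    cutEdges G S T = cutEdges G T S := by
  rw [cutEdges_eq_sum, cutEdges_eq_sum, sum_comm]
  simp only [G.adj_comm]

theorem vol_union [DecidableEq W] (G : SimpleGraph W) {L R : Finset W} (hLR : Disjoint L R) :
    vol G (L ∪ R) = vol G L + vol G R :=
  sum_union hLR

theorem cutEdges_compl_add_cutEdges_self [Fintype W] [DecidableEq W] (G : SimpleGraph W)
    (S : Finset W) : cutEdges G S Sᶜ + cutEdges G S S = vol G S := by
  simp only [cutEdges_eq_sum, vol, deg_eq_sum, ← sum_add_distrib, sum_compl_add_sum]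

end Counting

section DoubleCover

variable {W : Type*} (G : SimpleGraph W)

@[simp]
theorem doubleCover_adj_inl_inl (u v : W) : ¬(doubleCover G).Adj (.inl u) (.inl v) := by
  simp [doubleCover]

@[simp]
theorem doubleCover_adj_inr_inr (u v : W) : ¬(doubleCover G).Adj (.inr u) (.inr v) := by
  simp [doubleCover]

@[simp]
theorem doubleCover_adj_inl_inr (u v : W) :
    (doubleCover G).Adj (.inl u) (.inr v) ↔ G.Adj u v := by
  simp [doubleCover]

@[simp]
theorem doubleCover_adj_inr_inl (u v : W) :
    (doubleCover G).Adj (.inr u) (.inl v) ↔ G.Adj u v := by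
  simp [doubleCover, G.adj_comm]

@[simp]
theorem deg_doubleCover_inl (u : W) : deg (doubleCover G) (.inl u) = deg G u := by
  have : {y | (doubleCover G).Adj (.inl u) y} = Sum.inr '' {v | G.Adj u v} := by
    ext (y | y) <;> simp
  rw [deg, this, Set.ncard_image_of_injective _ Sum.inr_injective, deg]

@[simp]
theorem deg_doubleCover_inr (u : W) : deg (doubleCover G) (.inr u) = deg G u := by
  have : {y | (doubleCover G).Adj (.inr u) y} = Sum.inl '' {v | G.Adj u v} := by
    ext (y | y) <;> simp
  rw [deg, this, Set.ncard_image_of_injective _ Sum.inl_injective, deg]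

theorem vol_doubleCover_disjSum (L R : Finset W) :
    vol (doubleCover G) (L.disjSum R) = vol G L + vol G R := by
  simp only [vol, sum_disjSum, deg_doubleCover_inl, deg_doubleCover_inr]

open scoped Classical in
theorem cutEdges_doubleCover_disjSum (L R : Finset W) :
    cutEdges (doubleCover G) (L.disjSum R) (L.disjSum R) = 2 * cutEdges G L R := by
  rw [two_mul]
  nth_rw 2 [cutEdges_comm]
  simp only [cutEdges_eq_sum, sum_disjSum, doubleCover_adj_inl_inl, doubleCover_adj_inr_inr,
    doubleCover_adj_inl_inr, doubleCover_adj_inr_inl, if_false, sum_const_zero, add_zero, zero_add]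
  rw [add_comm]

variable [Fintype W] [DecidableEq W]

theorem compl_disjSum (L R : Finset W) : (L.disjSum R)ᶜ = Lᶜ.disjSum Rᶜ := by
  ext (u | u) <;> simp

theorem vol_disjSum_le_vol_compl {L R : Finset W} (hLR : Disjoint L R) :
    vol (doubleCover G) (L.disjSum R) ≤ vol (doubleCover G) (L.disjSum R)ᶜ := by
  rw [compl_disjSum, vol_doubleCover_disjSum, vol_doubleCover_disjSum, add_comm]
  exact add_le_add (sum_le_sum_of_subset (subset_compl_iff_disjoint_right.2 hLR.symm))
    (sum_le_sum_of_subset (subset_compl_iff_disjoint_right.2 hLR))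

theorem conductance_doubleCover_disjSum {L R : Finset W} (hLR : Disjoint L R)
    (hvol : 0 < vol G (L ∪ R)) :
    conductance (doubleCover G) (L.disjSum R) = bipartiteness G L R := by
  have hvolS : vol (doubleCover G) (L.disjSum R) = vol G (L ∪ R) := by
    rw [vol_doubleCover_disjSum, vol_union G hLR]
  have hcut := cutEdges_compl_add_cutEdges_self (doubleCover G) (L.disjSum R)
  rw [cutEdges_doubleCover_disjSum, hvolS] at hcut
  rw [conductance, bipartiteness, min_eq_left (by exact_mod_cast vol_disjSum_le_vol_compl G hLR),
    hvolS, eq_sub_iff_add_eq, ← add_div, div_eq_one_iff_eq (by positivity)]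
  exact_mod_cast hcut

end DoubleCover

/-- For a finite undirected graph `G` with double cover `H` and a
simple set `S ⊆ V_H` with `vol_H(S) > 0`, the sets `L = {u : u₁ ∈ S}` and
`R = {u : u₂ ∈ S}` are disjoint and `β_G(L,R) = Φ_H(S)`. -/
theorem statement1 (G : SimpleGraph V) (S : Finset (V ⊕ V))
    (hsimple : ∀ v : V, ¬(Sum.inl v ∈ S ∧ Sum.inr v ∈ S))
    (hvol : 0 < vol (doubleCover G) S) :
    Disjoint (Finset.univ.filter fun u : V => Sum.inl u ∈ S)
        (Finset.univ.filter fun u : V => Sum.inr u ∈ S) ∧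
      bipartiteness G (Finset.univ.filter fun u : V => Sum.inl u ∈ S)
          (Finset.univ.filter fun u : V => Sum.inr u ∈ S)
        = conductance (doubleCover G) S := by
  have hL : (univ.filter fun u : V => Sum.inl u ∈ S) = S.toLeft := by ext; simp
  have hR : (univ.filter fun u : V => Sum.inr u ∈ S) = S.toRight := by ext; simp
  rw [hL, hR]
  obtain ⟨L, R, rfl⟩ : ∃ L R : Finset V, S = L.disjSum R :=
    ⟨_, _, S.toLeft_disjSum_toRight.symm⟩
  rw [toLeft_disjSum, toRight_disjSum]
  have hLR : Disjoint L R := disjoint_left.2 fun v hvL hvR => hsimple v (by simp [hvL, hvR])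
  have hvolLR : 0 < vol G (L ∪ R) := by
    rwa [vol_doubleCover_disjSum, ← vol_union G hLR] at hvol
  exact ⟨hLR, (conductance_doubleCover_disjSum G hLR hvolLR).symm⟩

end Paper
end

section
/- Let G be a finite undirected graph in which every vertex has positive degree, with double cover H and lazy random walk matrix W on H. Let α ∈ (0,1], let s, r ∈ ℝ_{≥0}^{2n} be nonnegative vectors such that the approximate Pagerank vector apr_H(α, s, r) is entrywise nonnegative, and set p = σ∘apr_H(α, s, r). Then for every u ∈ V_G, p(u₁) ≤ α(s(u₁) + r(u₂)) + (1 − α)(pW)(u₁), and p(u₂) ≤ α(s(u₂) + r(u₁)) + (1 − α)(pW)(u₂). -/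
/-!
Write `x̄` for the twin of `x` in the double cover `H`, and `p = apr(α, s, r) = pr(α, s) - pr(α, r)`,
so that `p = α (s - r) + (1 - α) p W` by linearity. Swapping the two copies is an automorphism of
`H`, hence commutes with `W`, so `δ(x) = p(x) - p(x̄)` satisfies
`δ = α ((s - r) - (s - r)∘swap) + (1 - α) δ W`. Now `σ∘p = max(0, δ)` dominates `δ`, `W` is
monotone, and `s, r ≥ 0` bound the seed term by `s(x) + r(x̄)`; when `δ(x) ≤ 0` the right-hand
side is nonnegative anyway.
-/

open Finset

namespace Paper

variable {V : Type*} [Fintype V] [DecidableEq V]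

theorem deg_iso {U W : Type*} {G : SimpleGraph U} {G' : SimpleGraph W} (e : G ≃g G') (v : U) :
    deg G' (e v) = deg G v := by
  unfold deg
  rw [← Set.ncard_image_of_injective _ e.injective]
  congr 1
  ext w
  obtain ⟨u, rfl⟩ := e.surjective w
  simp [e.map_adj_iff]

section LazyWalk

variable {U W : Type*} [Fintype U] [Fintype W] (G : SimpleGraph U)

theorem lazyWalk_sub (p q : U → ℝ) (x : U) :
    lazyWalk G (p - q) x = lazyWalk G p x - lazyWalk G q x := by
  classical
  have hite : ∀ y, (if G.Adj y x then (p y - q y) / (deg G y : ℝ) else 0) =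
      (if G.Adj y x then p y / (deg G y : ℝ) else 0) -
        (if G.Adj y x then q y / (deg G y : ℝ) else 0) := fun y => by
    split_ifs <;> ring
  simp only [lazyWalk, Pi.sub_apply, hite, Finset.sum_sub_distrib]
  ring

theorem lazyWalk_mono {p q : U → ℝ} (h : p ≤ q) (x : U) : lazyWalk G p x ≤ lazyWalk G q x := by
  unfold lazyWalk
  gcongr with y
  · exact h x
  · split_ifs
    · exact div_le_div_of_nonneg_right (h y) (Nat.cast_nonneg _)
    · rfl

theorem lazyWalk_nonneg {p : U → ℝ} (hp : 0 ≤ p) (x : U) : 0 ≤ lazyWalk G p x := by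
  simpa [lazyWalk] using lazyWalk_mono G hp x

theorem lazyWalk_comp_iso {G' : SimpleGraph W} (e : G ≃g G') (q : W → ℝ) (x : U) :
    lazyWalk G (q ∘ e) x = lazyWalk G' q (e x) := by
  unfold lazyWalk
  rw [← e.toEquiv.sum_comp]
  simp only [RelIso.coe_fn_toEquiv, Function.comp_apply, deg_iso]
  congr! with y
  exact e.map_adj_iff.symm

end LazyWalk

theorem IsApr.eq_step {U : Type*} [Fintype U] {G : SimpleGraph U} {α : ℝ} {s r p : U → ℝ}
    (h : IsApr G α s r p) (x : U) :
    p x = α * (s x - r x) + (1 - α) * lazyWalk G p x := by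
  obtain ⟨qs, qr, hqs, hqr, hsum⟩ := h
  have hp : p = qs - qr := funext fun y => eq_sub_of_add_eq (hsum y)
  rw [hp, lazyWalk_sub, Pi.sub_apply, hqs x, hqr x]
  ring

def doubleCoverSwap {U : Type*} (G : SimpleGraph U) : doubleCover G ≃g doubleCover G where
  toEquiv := Equiv.sumComm U U
  map_rel_iff' {a b} := by
    cases a <;> cases b <;> simp [doubleCover, G.adj_comm]

@[simp]
theorem doubleCoverSwap_apply {U : Type*} (G : SimpleGraph U) (x : U ⊕ U) :
    doubleCoverSwap G x = x.swap :=
  rfl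

theorem simplify_apply {U : Type*} (p : U ⊕ U → ℝ) (x : U ⊕ U) :
    simplify p x = max 0 (p x - p x.swap) := by
  cases x <;> rfl

theorem simplify_apr_le {U : Type*} [Fintype U] {G : SimpleGraph U} {α : ℝ}
    (hα0 : 0 ≤ α) (hα1 : α ≤ 1) {s r p : U ⊕ U → ℝ} (hs : ∀ x, 0 ≤ s x) (hr : ∀ x, 0 ≤ r x)
    (happr : IsApr (doubleCover G) α s r p) (x : U ⊕ U) :
    simplify p x ≤ α * (s x + r x.swap) + (1 - α) * lazyWalk (doubleCover G) (simplify p) x := by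
  set H := doubleCover G
  set δ : U ⊕ U → ℝ := p - p ∘ doubleCoverSwap G
  have hδ : δ x = α * ((s x - r x) - (s x.swap - r x.swap)) + (1 - α) * lazyWalk H δ x := by
    rw [lazyWalk_sub, lazyWalk_comp_iso, doubleCoverSwap_apply]
    change p x - p x.swap = _
    rw [happr.eq_step x, happr.eq_step x.swap]
    ring
  have hδ_le : δ ≤ simplify p := fun y => (simplify_apply p y).symm ▸ le_max_right _ _
  have hW_nonneg : 0 ≤ lazyWalk H (simplify p) x :=
    lazyWalk_nonneg H (fun y => (simplify_apply p y).symm ▸ le_max_left _ _) x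
  rw [simplify_apply]
  apply max_le
  · exact add_nonneg (mul_nonneg hα0 (add_nonneg (hs x) (hr x.swap)))
      (mul_nonneg (sub_nonneg.2 hα1) hW_nonneg)
  · change δ x ≤ _
    rw [hδ]
    gcongr α * ?_ + (1 - α) * ?_
    · linarith [hs x.swap, hr x]
    · exact lazyWalk_mono H hδ_le x

theorem statement6_general (G : SimpleGraph V)
    (α : ℝ) (hα0 : 0 < α) (hα1 : α ≤ 1)
    (s r p' : V ⊕ V → ℝ) (hs : ∀ x, 0 ≤ s x) (hr : ∀ x, 0 ≤ r x)
    (happr : IsApr (doubleCover G) α s r p') :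
    ∀ u : V,
      simplify p' (Sum.inl u)
          ≤ α * (s (Sum.inl u) + r (Sum.inr u))
            + (1 - α) * lazyWalk (doubleCover G) (simplify p') (Sum.inl u) ∧
      simplify p' (Sum.inr u)
          ≤ α * (s (Sum.inr u) + r (Sum.inl u))
            + (1 - α) * lazyWalk (doubleCover G) (simplify p') (Sum.inr u) := fun u =>
  ⟨simplify_apr_le hα0.le hα1 hs hr happr (Sum.inl u),
    simplify_apr_le hα0.le hα1 hs hr happr (Sum.inr u)⟩

/-- Let `G` have positive degrees everywhere, with double cover `H`
and lazy random walk matrix `W`. Let `α ∈ (0,1]`, let `s, r` be nonnegative with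
`apr_H(α,s,r)` entrywise nonnegative, and `p = σ∘apr_H(α,s,r)`. Then for every `u`:
`p(u₁) ≤ α(s(u₁)+r(u₂)) + (1-α)(pW)(u₁)` and `p(u₂) ≤ α(s(u₂)+r(u₁)) + (1-α)(pW)(u₂)`. -/
theorem statement6 (G : SimpleGraph V) (hdeg : ∀ v, 0 < deg G v)
    (α : ℝ) (hα0 : 0 < α) (hα1 : α ≤ 1)
    (s r p' : V ⊕ V → ℝ) (hs : ∀ x, 0 ≤ s x) (hr : ∀ x, 0 ≤ r x)
    (happr : IsApr (doubleCover G) α s r p') (hp' : ∀ x, 0 ≤ p' x) :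
    ∀ u : V,
      simplify p' (Sum.inl u)
          ≤ α * (s (Sum.inl u) + r (Sum.inr u))
            + (1 - α) * lazyWalk (doubleCover G) (simplify p') (Sum.inl u) ∧
      simplify p' (Sum.inr u)
          ≤ α * (s (Sum.inr u) + r (Sum.inl u))
            + (1 - α) * lazyWalk (doubleCover G) (simplify p') (Sum.inr u) :=
  statement6_general G α hα0 hα1 s r p' hs hr happr

end Paper
end

section
/- Let G be a finite directed graph with semi-double cover H, and let S ⊆ V_H be a simple set with vol_H(S) > 0 and vol_H(S) ≤ |E_G|. Define L = {u ∈ V_G : u₁ ∈ S} and R = {u ∈ V_G : u₂ ∈ S}. Then F_G(L, R) = Φ_H(S). -/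
open Finset

namespace Paper

variable {V : Type*} [Fintype V] [DecidableEq V]

/-! Write `S = L₁ ∪ R₂`. Every edge of the semi-double cover `H` is a directed edge `u → v` of `G`
seen as `{u₁, v₂}`, so `vol_H(S) = vol_out(L) + vol_in(R)`. Sorting the edges leaving `L` and
those entering `R` by whether they run from `L` to `R` gives `vol_H(S) = |∂S| + 2 e(L,R)`.
As `vol_H(V_H) = 2|E_G|`, the assumption `vol_H(S) ≤ |E_G|` makes `vol_H(S)` the minimum in
`Φ_H(S)`, and then `F(L,R) = 1 - 2 e(L,R) / vol_H(S) = |∂S| / vol_H(S)`. -/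

open scoped Classical in
lemma eDir_eq_sum {α : Type*} (E : α → α → Prop) (L R : Finset α) :
    eDir E L R = ∑ u ∈ L, ∑ v ∈ R, if E u v then 1 else 0 := by
  have : {e : α × α | e.1 ∈ L ∧ e.2 ∈ R ∧ E e.1 e.2} = ↑((L ×ˢ R).filter fun e => E e.1 e.2) := by
    ext; simp [and_assoc]
  rw [eDir, this, Set.ncard_coe_finset, card_filter, sum_product]

lemma deg_eq_degOut {α : Type*} (G : SimpleGraph α) (v : α) : deg G v = degOut G.Adj v := rfl

lemma cutEdges_eq_eDir {α : Type*} (G : SimpleGraph α) (S T : Finset α) :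
    cutEdges G S T = eDir G.Adj S T := rfl

section Counting

variable {α : Type*} [Fintype α] (E : α → α → Prop)

open scoped Classical in
lemma degOut_eq_sum (u : α) : degOut E u = ∑ v, if E u v then 1 else 0 := by
  rw [degOut, Set.ncard_eq_toFinset_card', Set.toFinset_ofPred, card_filter]

open scoped Classical in
lemma degIn_eq_sum (u : α) : degIn E u = ∑ v, if E v u then 1 else 0 :=
  degOut_eq_sum (fun a b => E b a) u

lemma volOut_eq_eDir_add_eDir_compl [DecidableEq α] (L R : Finset α) :
    volOut E L = eDir E L R + eDir E L Rᶜ := by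
  classical
  simp only [volOut, degOut_eq_sum, eDir_eq_sum, ← sum_add_distrib, sum_add_sum_compl]

lemma volIn_eq_eDir_add_eDir_compl [DecidableEq α] (L R : Finset α) :
    volIn E R = eDir E L R + eDir E Lᶜ R := by
  classical
  rw [eDir_eq_sum, eDir_eq_sum, sum_comm, sum_comm (s := Lᶜ), ← sum_add_distrib]
  simp only [volIn, degIn_eq_sum, sum_add_sum_compl]

lemma eDir_univ_univ : eDir E univ univ = numEdges E := by
  simp [eDir, numEdges]

end Counting

section SemiDoubleCover

variable {α : Type*} (E : α → α → Prop)

@[simp] lemma semiDoubleCover_adj_inl_inr (u v : α) :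
    (semiDoubleCover E).Adj (.inl u) (.inr v) ↔ E u v := by
  simp [semiDoubleCover]

@[simp] lemma semiDoubleCover_adj_inr_inl (u v : α) :
    (semiDoubleCover E).Adj (.inr v) (.inl u) ↔ E u v := by
  simp [semiDoubleCover]

@[simp] lemma semiDoubleCover_not_adj_inl_inl (u v : α) :
    ¬ (semiDoubleCover E).Adj (.inl u) (.inl v) := by
  simp [semiDoubleCover]

@[simp] lemma semiDoubleCover_not_adj_inr_inr (u v : α) :
    ¬ (semiDoubleCover E).Adj (.inr u) (.inr v) := by
  simp [semiDoubleCover]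

lemma cutEdges_semiDoubleCover (S T : Finset (α ⊕ α)) :
    cutEdges (semiDoubleCover E) S T = eDir E S.toLeft T.toRight + eDir E T.toLeft S.toRight := by
  classical
  rw [cutEdges_eq_eDir, eDir_eq_sum, eDir_eq_sum, eDir_eq_sum, sum_comm (s := T.toLeft)]
  conv_lhs => rw [← S.toLeft_disjSum_toRight, ← T.toLeft_disjSum_toRight]
  simp only [sum_disjSum, semiDoubleCover_adj_inl_inr, semiDoubleCover_adj_inr_inl,
    semiDoubleCover_not_adj_inl_inl, semiDoubleCover_not_adj_inr_inr, if_false, sum_const_zero,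
    add_zero, zero_add]

variable [Fintype α]

lemma deg_semiDoubleCover_inl (u : α) : deg (semiDoubleCover E) (.inl u) = degOut E u := by
  classical
  rw [deg_eq_degOut, degOut_eq_sum, degOut_eq_sum, Fintype.sum_sum_type]
  simp

lemma deg_semiDoubleCover_inr (u : α) : deg (semiDoubleCover E) (.inr u) = degIn E u := by
  classical
  rw [deg_eq_degOut, degOut_eq_sum, degIn_eq_sum, Fintype.sum_sum_type]
  simp

lemma vol_semiDoubleCover (S : Finset (α ⊕ α)) :
    vol (semiDoubleCover E) S = volOut E S.toLeft + volIn E S.toRight := by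
  conv_lhs => rw [← S.toLeft_disjSum_toRight]
  simp only [vol, sum_disjSum, deg_semiDoubleCover_inl, deg_semiDoubleCover_inr, volOut, volIn]

end SemiDoubleCover

lemma _root_.Finset.toLeft_compl {α β : Type*} [Fintype α] [Fintype β] [DecidableEq α]
    [DecidableEq β] (u : Finset (α ⊕ β)) : uᶜ.toLeft = u.toLeftᶜ := by
  ext; simp

lemma _root_.Finset.toRight_compl {α β : Type*} [Fintype α] [Fintype β] [DecidableEq α]
    [DecidableEq β] (u : Finset (α ⊕ β)) : uᶜ.toRight = u.toRightᶜ := by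
  ext; simp

section FlowRatio

variable {α : Type*} [Fintype α] [DecidableEq α] (E : α → α → Prop)

lemma cutEdges_semiDoubleCover_compl_add_two_mul_eDir (S : Finset (α ⊕ α)) :
    cutEdges (semiDoubleCover E) S Sᶜ + 2 * eDir E S.toLeft S.toRight =
      vol (semiDoubleCover E) S := by
  rw [cutEdges_semiDoubleCover, vol_semiDoubleCover, toLeft_compl, toRight_compl,
    volOut_eq_eDir_add_eDir_compl E S.toLeft S.toRight,
    volIn_eq_eDir_add_eDir_compl E S.toLeft S.toRight]
  ring

lemma vol_semiDoubleCover_add_vol_compl (S : Finset (α ⊕ α)) :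
    vol (semiDoubleCover E) S + vol (semiDoubleCover E) Sᶜ = 2 * numEdges E := by
  rw [vol, vol, sum_add_sum_compl, ← vol, vol_semiDoubleCover, toLeft_univ, toRight_univ,
    volOut_eq_eDir_add_eDir_compl E univ univ, volIn_eq_eDir_add_eDir_compl E univ univ,
    compl_univ, eDir_univ_univ]
  simp [eDir, two_mul]

lemma flowRatio_toLeft_toRight_eq_conductance (S : Finset (α ⊕ α))
    (h0 : 0 < vol (semiDoubleCover E) S) (h1 : vol (semiDoubleCover E) S ≤ numEdges E) :
    flowRatio E S.toLeft S.toRight = conductance (semiDoubleCover E) S := by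
  have hcut := cutEdges_semiDoubleCover_compl_add_two_mul_eDir E S
  have hmin : vol (semiDoubleCover E) S ≤ vol (semiDoubleCover E) Sᶜ := by
    have := vol_semiDoubleCover_add_vol_compl E S
    omega
  rw [flowRatio, conductance, min_eq_left (mod_cast hmin), ← Nat.cast_add, ← vol_semiDoubleCover]
  have hvol : (0 : ℝ) < vol (semiDoubleCover E) S := mod_cast h0
  field_simp
  rw [← hcut]
  push_cast
  ring

end FlowRatio

theorem statement9_general (E : V → V → Prop) (S : Finset (V ⊕ V))
    (h0 : 0 < vol (semiDoubleCover E) S)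
    (h1 : vol (semiDoubleCover E) S ≤ numEdges E) :
    flowRatio E (Finset.univ.filter fun u : V => Sum.inl u ∈ S)
        (Finset.univ.filter fun u : V => Sum.inr u ∈ S)
      = conductance (semiDoubleCover E) S := by
  have hL : (univ.filter fun u : V => Sum.inl u ∈ S) = S.toLeft := by ext; simp
  have hR : (univ.filter fun u : V => Sum.inr u ∈ S) = S.toRight := by ext; simp
  rw [hL, hR]
  exact flowRatio_toLeft_toRight_eq_conductance E S h0 h1

/-- Let `G` be a finite digraph (edge relation `E`) with semi-double
cover `H`, and `S ⊆ V_H` simple with `0 < vol_H(S) ≤ |E_G|`. Then with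
`L = {u : u₁ ∈ S}` and `R = {u : u₂ ∈ S}` it holds that `F_G(L,R) = Φ_H(S)`. -/
theorem statement9 (E : V → V → Prop) (S : Finset (V ⊕ V))
    (hsimple : ∀ v : V, ¬(Sum.inl v ∈ S ∧ Sum.inr v ∈ S))
    (h0 : 0 < vol (semiDoubleCover E) S)
    (h1 : vol (semiDoubleCover E) S ≤ numEdges E) :
    flowRatio E (Finset.univ.filter fun u : V => Sum.inl u ∈ S)
        (Finset.univ.filter fun u : V => Sum.inr u ∈ S)
      = conductance (semiDoubleCover E) S :=
  statement9_general E S h0 h1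

end Paper
end
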